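/- Let y* ∈ [2,3], let 0 < z̄ < z₁ < 1 and η > 0, and let (ρ, ω) be a pair of differentiable functions solving the system on an open interval containing [z̄, z₁], satisfying for all z ∈ [z̄, z₁]: 1 − y*²z²ω(z)² > η, ρ(z) > 0, |ρ(z)| ≤ 1/(y*·z̄) and |ω(z)| ≤ 1/(y*·z̄). Then there exists t > 0 depending only on η and z̄ (and not on y* or on the particular solution) such that (ρ, ω) extends to a differentiable solution of the system on [z̄ − t, z₁] satisfying 1 − y*²z²ω(z)² > 0 and ρ(z) > 0 for all z ∈ [z̄ − t, z₁]. -/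

import Mathlib

/-- The rescaled self-similar isothermal Euler–Poisson system with parameter `y = y*`,
at the point `z`. -/
def EPSys (y : ℝ) (ρ ω : ℝ → ℝ) (z : ℝ) : Prop :=
  deriv ρ z =
    -(2 * y ^ 2 * z * ω z * ρ z * (ρ z - ω z)) / (1 - y ^ 2 * z ^ 2 * (ω z) ^ 2) ∧
  deriv ω z =
    (1 - 3 * ω z) / z +
      2 * y ^ 2 * z * (ω z) ^ 2 * (ρ z - ω z) / (1 - y ^ 2 * z ^ 2 * (ω z) ^ 2)

/-!
Writing `u = (ρ, ω)`, the system is the ODE `u' = F_y(z, u)` for a field that is smooth away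
from `z = 0` and from the sonic set `y z ω = ±1`. The bounds on `u(z̄)` and the margin `η` give a
tube `[z̄ - a, z̄] × closedBall (u z̄) R`, with `a`, `R` depending only on `η` and `z̄`, on which
the field stays at distance `η / 2` from the sonic set and is bounded by some `C` with `C a ≤ R`.
Picard–Lindelöf then solves backwards from `z̄` on `[z̄ - a, z̄]`; its Lipschitz constant comes from
compactness and may depend on `y`, but `a` does not. Since `ρ' = -ρ q` with `q` bounded on the
tube, Grönwall keeps `ρ` away from zero, and gluing at `z̄` extends the solution to
`[z̄ - a/2, z₁]`.
-/

open Set Metric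
open scoped NNReal

/-- `IsPicardLindelof.exists_eq_forall_mem_Icc_hasDerivWithinAt` forgets that the solution, a
fixed point of the Picard map on `ODE.FunSpace`, stays in the ball where the field is controlled. -/
theorem IsPicardLindelof.exists_eq_forall_mem_Icc_hasDerivWithinAt_mem_closedBall
    {E : Type*} [NormedAddCommGroup E] [NormedSpace ℝ E] [CompleteSpace E]
    {f : ℝ → E → E} {tmin tmax : ℝ} {t₀ : Icc tmin tmax} {x₀ : E} {a L K : ℝ≥0}
    (hf : IsPicardLindelof f t₀ x₀ a 0 L K) :
    ∃ α : ℝ → E, α t₀ = x₀ ∧ ∀ t ∈ Icc tmin tmax,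
      α t ∈ closedBall x₀ a ∧ HasDerivWithinAt α (f t (α t)) (Icc tmin tmax) t := by
  have hx₀ : x₀ ∈ closedBall x₀ ((0 : ℝ≥0) : ℝ) := mem_closedBall_self le_rfl
  obtain ⟨α, hα⟩ := ODE.FunSpace.exists_isFixedPt_next hf hx₀
  have hmem (t : ℝ) : α.compProj t ∈ closedBall x₀ a := α.compProj_mem_closedBall hf.mul_max_le
  refine ⟨α.compProj, by rw [ODE.FunSpace.compProj_val, ← hα, ODE.FunSpace.next_apply₀],
    fun t ht ↦ ⟨hmem t, ?_⟩⟩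
  refine ODE.hasDerivWithinAt_picard_Icc t₀.2 hf.continuousOn_uncurry
    α.continuous_compProj.continuousOn (fun t _ ↦ hmem t) x₀ ht |>.congr_of_mem (fun t' ht' ↦ ?_) ht
  nth_rw 1 [← hα]
  rw [ODE.FunSpace.compProj_of_mem ht', ODE.FunSpace.next_apply]

theorem ContDiffOn.exists_lipschitzOnWith_uncurry {E F : Type*}
    [NormedAddCommGroup E] [NormedSpace ℝ E] [NormedAddCommGroup F] [NormedSpace ℝ F]
    {v : ℝ → E → F} {s : Set ℝ} {B : Set E} (hv : ContDiffOn ℝ 1 (Function.uncurry v) (s ×ˢ B))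
    (hs : Convex ℝ s) (hs' : IsCompact s) (hB : Convex ℝ B) (hB' : IsCompact B) :
    ∃ K, ∀ t ∈ s, LipschitzOnWith K (v t) B := by
  obtain ⟨K, hK⟩ := hv.exists_lipschitzOnWith one_ne_zero (hs.prod hB) (hs'.prod hB')
  refine ⟨K, fun t ht ↦ ?_⟩
  have h := hK.comp (LipschitzWith.prodMk_left t).lipschitzOnWith fun x hx ↦ ⟨ht, hx⟩
  rwa [mul_one] at h

theorem pos_of_hasDerivWithinAt_of_abs_deriv_le_mul_abs_self {f f' : ℝ → ℝ} {a b K : ℝ}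
    (hf : ∀ t ∈ Icc a b, HasDerivWithinAt f (f' t) (Icc a b) t)
    (bound : ∀ t ∈ Icc a b, |f' t| ≤ K * |f t|) (hb : 0 < f b) :
    ∀ t ∈ Icc a b, 0 < f t := by
  have hcont : ContinuousOn f (Icc a b) := fun t ht ↦ (hf t ht).continuousWithinAt
  intro t ht
  by_contra! hft
  obtain ⟨s, hs, hfs⟩ := intermediate_value_Icc ht.2 (hcont.mono (Icc_subset_Icc_left ht.1))
    ⟨hft, hb.le⟩
  have hsub : Icc s b ⊆ Icc a b := Icc_subset_Icc_left (ht.1.trans hs.1)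
  have hzero := eq_zero_of_abs_deriv_le_mul_abs_self_of_eq_zero_right (hcont.mono hsub)
    (fun u hu ↦ (hf u (hsub (Ico_subset_Icc_self hu))).mono_of_mem_nhdsWithin
      (Icc_mem_nhdsGE_of_mem ⟨(ht.1.trans hs.1).trans hu.1, hu.2⟩)) hfs
    (fun u hu ↦ bound u (hsub (Ico_subset_Icc_self hu))) b ⟨hs.2, le_rfl⟩
  exact hb.ne' hzero

theorem hasDerivAt_ite_lt {E : Type*} [NormedAddCommGroup E] [NormedSpace ℝ E]
    {v : ℝ → E → E} {f g : ℝ → E} {b z : ℝ}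
    (hf : z ≤ b → HasDerivWithinAt f (v z (f z)) (Iic b) z)
    (hg : b ≤ z → HasDerivAt g (v z (g z)) z) (hfg : f b = g b) :
    HasDerivAt (fun t ↦ if t < b then f t else g t) (v z (if z < b then f z else g z)) z := by
  rcases lt_trichotomy z b with hzb | rfl | hbz
  · rw [if_pos hzb]
    exact ((hf hzb.le).hasDerivAt (Iic_mem_nhds hzb)).congr_of_eventuallyEq
      (eventually_lt_nhds hzb |>.mono fun t ht ↦ if_pos ht)
  · rw [if_neg (lt_irrefl z)]
    have hleft : HasDerivWithinAt (fun t ↦ if t < z then f t else g t) (v z (g z)) (Iic z) z := by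
      refine hfg ▸ (hf le_rfl).congr (fun t ht ↦ ?_) (by simp [hfg])
      rcases (mem_Iic.1 ht).lt_or_eq with htz | rfl
      · exact if_pos htz
      · simp [hfg]
    have hright : HasDerivWithinAt (fun t ↦ if t < z then f t else g t) (v z (g z)) (Ici z) z :=
      (hg le_rfl).hasDerivWithinAt.congr (fun t ht ↦ if_neg (not_lt.2 ht)) (if_neg (lt_irrefl z))
    simpa [Iic_union_Ici] using hleft.union hright
  · rw [if_neg hbz.not_gt]
    exact (hg hbz.le).congr_of_eventuallyEq
      (eventually_gt_nhds hbz |>.mono fun t ht ↦ if_neg ht.not_gt)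

noncomputable def eulerPoissonField (y z : ℝ) (x : ℝ × ℝ) : ℝ × ℝ :=
  (-(2 * y ^ 2 * z * x.2 * x.1 * (x.1 - x.2)) / (1 - y ^ 2 * z ^ 2 * x.2 ^ 2),
    (1 - 3 * x.2) / z + 2 * y ^ 2 * z * x.2 ^ 2 * (x.1 - x.2) / (1 - y ^ 2 * z ^ 2 * x.2 ^ 2))

theorem EPSys.hasDerivAt {y z : ℝ} {ρ ω : ℝ → ℝ} (hρ : DifferentiableAt ℝ ρ z)
    (hω : DifferentiableAt ℝ ω z) (h : EPSys y ρ ω z) :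
    HasDerivAt (fun t ↦ (ρ t, ω t)) (eulerPoissonField y z (ρ z, ω z)) z :=
  (h.1 ▸ hρ.hasDerivAt).prodMk (h.2 ▸ hω.hasDerivAt)

theorem epSys_of_hasDerivAt {y z : ℝ} {u : ℝ → ℝ × ℝ}
    (hu : HasDerivAt u (eulerPoissonField y z (u z)) z) :
    DifferentiableAt ℝ (fun t ↦ (u t).1) z ∧ DifferentiableAt ℝ (fun t ↦ (u t).2) z ∧
      EPSys y (fun t ↦ (u t).1) (fun t ↦ (u t).2) z := by
  have h₁ := hasFDerivAt_fst.comp_hasDerivAt z hu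
  have h₂ := hasFDerivAt_snd.comp_hasDerivAt z hu
  exact ⟨h₁.differentiableAt, h₂.differentiableAt, h₁.deriv, h₂.deriv⟩

theorem contDiffOn_uncurry_eulerPoissonField (y : ℝ) :
    ContDiffOn ℝ 1 (Function.uncurry (eulerPoissonField y))
      {q : ℝ × ℝ × ℝ | q.1 ≠ 0 ∧ 1 - y ^ 2 * q.1 ^ 2 * q.2.2 ^ 2 ≠ 0} := by
  refine ContDiffOn.prodMk ?_ (.add ?_ ?_)
  · exact .div (by fun_prop) (by fun_prop) fun q hq ↦ hq.2
  · exact .div (by fun_prop) (by fun_prop) fun q hq ↦ hq.1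
  · exact .div (by fun_prop) (by fun_prop) fun q hq ↦ hq.2

theorem sub_le_one_sub_sq_of_abs_sub_le {u u₀ ε η : ℝ} (hη : 0 ≤ η) (hu₀ : η < 1 - u₀ ^ 2)
    (hu : |u - u₀| ≤ ε) (hε : ε ≤ 1) : η - 3 * ε ≤ 1 - u ^ 2 := by
  have habs : |u₀| ≤ 1 := sq_le_one_iff_abs_le_one u₀ |>.1 (by linarith)
  have key : u ^ 2 - u₀ ^ 2 ≤ |u - u₀| * (|u - u₀| + 2 * |u₀|) := by
    calc u ^ 2 - u₀ ^ 2 = (u - u₀) * ((u - u₀) + 2 * u₀) := by ring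
      _ ≤ |(u - u₀) * ((u - u₀) + 2 * u₀)| := le_abs_self _
      _ ≤ |u - u₀| * (|u - u₀| + 2 * |u₀|) := by
        rw [abs_mul]
        gcongr
        exact (abs_add_le _ _).trans (by rw [abs_mul, abs_two])
  nlinarith [abs_nonneg (u - u₀), abs_nonneg u₀]

theorem abs_mul_sub_mul_le {z z₀ w w₀ a b M : ℝ} (hz : |z - z₀| ≤ a) (hw : |w| ≤ M)
    (hw₀ : |w - w₀| ≤ b) : |z * w - z₀ * w₀| ≤ a * M + |z₀| * b := by
  calc |z * w - z₀ * w₀| = |(z - z₀) * w + z₀ * (w - w₀)| := by ring_nf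
    _ ≤ |z - z₀| * |w| + |z₀| * |w - w₀| := by
        simpa only [abs_mul] using abs_add_le ((z - z₀) * w) (z₀ * (w - w₀))
    _ ≤ a * M + |z₀| * b := by gcongr; exact (abs_nonneg _).trans hz

noncomputable def eulerPoissonCoupling (y z : ℝ) (x : ℝ × ℝ) : ℝ :=
  2 * y ^ 2 * z * x.2 * (x.1 - x.2) / (1 - y ^ 2 * z ^ 2 * x.2 ^ 2)

theorem eulerPoissonField_eq (y z : ℝ) (x : ℝ × ℝ) :
    eulerPoissonField y z x =
      (-(x.1 * eulerPoissonCoupling y z x),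
        (1 - 3 * x.2) / z + x.2 * eulerPoissonCoupling y z x) := by
  simp only [eulerPoissonField, eulerPoissonCoupling, Prod.mk.injEq]
  constructor <;> ring

section FieldBounds

variable {y z Y Z M d : ℝ} {x : ℝ × ℝ}

theorem abs_eulerPoissonCoupling_le (hy : |y| ≤ Y) (hz : |z| ≤ Z) (hx : ‖x‖ ≤ M) (hd : 0 < d)
    (hD : d ≤ 1 - y ^ 2 * z ^ 2 * x.2 ^ 2) :
    |eulerPoissonCoupling y z x| ≤ 4 * Y ^ 2 * Z * M ^ 2 / d := by
  have h₁ : |x.1| ≤ M := (norm_fst_le x).trans hx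
  have h₂ : |x.2| ≤ M := (norm_snd_le x).trans hx
  have hZ : 0 ≤ Z := (abs_nonneg z).trans hz
  have hM : 0 ≤ M := (abs_nonneg x.1).trans h₁
  have hsub : |x.1 - x.2| ≤ 2 * M := (abs_sub _ _).trans (by linarith)
  rw [eulerPoissonCoupling, abs_div, abs_of_pos (hd.trans_le hD)]
  refine div_le_div₀ (by positivity) ?_ hd hD
  calc |2 * y ^ 2 * z * x.2 * (x.1 - x.2)| = 2 * |y| ^ 2 * |z| * |x.2| * |x.1 - x.2| := by
        simp only [abs_mul, abs_pow, abs_two]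
    _ ≤ 2 * Y ^ 2 * Z * M * (2 * M) := by gcongr
    _ = 4 * Y ^ 2 * Z * M ^ 2 := by ring

theorem abs_eulerPoissonField_fst_le (hy : |y| ≤ Y) (hz : |z| ≤ Z) (hx : ‖x‖ ≤ M) (hd : 0 < d)
    (hD : d ≤ 1 - y ^ 2 * z ^ 2 * x.2 ^ 2) :
    |(eulerPoissonField y z x).1| ≤ 4 * Y ^ 2 * Z * M ^ 2 / d * |x.1| := by
  rw [eulerPoissonField_eq, abs_neg, abs_mul, mul_comm]
  gcongr
  exact abs_eulerPoissonCoupling_le hy hz hx hd hD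

theorem abs_eulerPoissonField_snd_le {Z₀ : ℝ} (hy : |y| ≤ Y) (hz : |z| ≤ Z) (hZ₀ : 0 < Z₀)
    (hz₀ : Z₀ ≤ z) (hx : ‖x‖ ≤ M) (hd : 0 < d) (hD : d ≤ 1 - y ^ 2 * z ^ 2 * x.2 ^ 2) :
    |(eulerPoissonField y z x).2| ≤ (1 + 3 * M) / Z₀ + 4 * Y ^ 2 * Z * M ^ 2 / d * M := by
  have h₂ : |x.2| ≤ M := (norm_snd_le x).trans hx
  have hq := abs_eulerPoissonCoupling_le hy hz hx hd hD
  have hlin : |1 - 3 * x.2| ≤ 1 + 3 * M := by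
    calc |1 - 3 * x.2| ≤ |(1 : ℝ)| + |3 * x.2| := abs_sub _ _
      _ ≤ 1 + 3 * M := by rw [abs_one, abs_mul, abs_of_pos three_pos]; linarith
  rw [eulerPoissonField_eq]
  refine (abs_add_le _ _).trans (add_le_add ?_ ?_)
  · rw [abs_div, abs_of_pos (hZ₀.trans_le hz₀)]
    exact div_le_div₀ (by linarith [abs_nonneg (1 - 3 * x.2)]) hlin hZ₀ hz₀
  · rw [abs_mul, mul_comm]
    exact mul_le_mul hq h₂ (abs_nonneg _) ((abs_nonneg _).trans hq)

end FieldBounds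

theorem exists_uniform_tube {η zbar r Y : ℝ} (hη : 0 < η) (hzbar : 0 < zbar) (hr : 0 ≤ r)
    (hY : 0 < Y) :
    ∃ a R C K : ℝ, 0 < a ∧ a < zbar ∧ 0 < R ∧ C * a ≤ R ∧
      ∀ y, |y| ≤ Y → ∀ x₀ : ℝ × ℝ, ‖x₀‖ ≤ r → η < 1 - y ^ 2 * zbar ^ 2 * x₀.2 ^ 2 →
      ∀ z ∈ Icc (zbar - a) zbar, ∀ x ∈ closedBall x₀ R,
        η / 2 ≤ 1 - y ^ 2 * z ^ 2 * x.2 ^ 2 ∧ ‖eulerPoissonField y z x‖ ≤ C ∧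
          |(eulerPoissonField y z x).1| ≤ K * |x.1| := by
  set ε := min (η / 6) 1
  have hε : 0 < ε := lt_min (by positivity) one_pos
  set R := ε / (2 * Y * zbar)
  have hR : 0 < R := by positivity
  have hYR : Y * zbar * R = ε / 2 := by simp only [R]; field_simp
  set M := r + R
  have hM : 0 < M := by positivity
  set K := 4 * Y ^ 2 * zbar * M ^ 2 / (η / 2)
  set C := (1 + 3 * M) / (zbar / 2) + K * M
  have hC : 0 < C := by positivity
  set a := min (zbar / 2) (min (ε / (2 * Y * M)) (R / C))
  have ha : 0 < a := lt_min (by positivity) (lt_min (by positivity) (by positivity))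
  have haz : a ≤ zbar / 2 := min_le_left _ _
  have haM : Y * a * M ≤ ε / 2 := by
    have : a ≤ ε / (2 * Y * M) := (min_le_right _ _).trans (min_le_left _ _)
    calc Y * a * M ≤ Y * (ε / (2 * Y * M)) * M := by gcongr
      _ = ε / 2 := by field_simp
  have hCa : C * a ≤ R := by
    have : a ≤ R / C := (min_le_right _ _).trans (min_le_right _ _)
    calc C * a ≤ C * (R / C) := by gcongr
      _ = R := by field_simp
  refine ⟨a, R, C, K, ha, by linarith, hR, hCa, fun y hy x₀ hx₀ hsub₀ z hz x hx ↦ ?_⟩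
  have hxM : ‖x‖ ≤ M := by
    have := norm_le_norm_add_norm_sub' x x₀
    rw [mem_closedBall_iff_norm] at hx
    linarith
  have hz₀ : zbar / 2 ≤ z := by linarith [hz.1]
  have hzZ : |z| ≤ zbar := abs_le.2 ⟨by linarith, hz.2⟩
  have hclose : |y * z * x.2 - y * zbar * x₀.2| ≤ ε := by
    rw [mem_closedBall_iff_norm] at hx
    have hnear := abs_mul_sub_mul_le (z := z) (z₀ := zbar) (a := a)
      (abs_le.2 ⟨by linarith [hz.1], by linarith [hz.2]⟩)
      ((norm_snd_le x).trans hxM) ((norm_snd_le (x - x₀)).trans hx)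
    rw [abs_of_pos hzbar] at hnear
    calc |y * z * x.2 - y * zbar * x₀.2| = |y| * |z * x.2 - zbar * x₀.2| := by
          rw [← abs_mul]; ring_nf
      _ ≤ Y * (a * M + zbar * R) := by gcongr
      _ = Y * a * M + ε / 2 := by rw [← hYR]; ring
      _ ≤ ε := by linarith
  have hmargin : η / 2 ≤ 1 - y ^ 2 * z ^ 2 * x.2 ^ 2 := by
    have h := sub_le_one_sub_sq_of_abs_sub_le hη.le (by rw [mul_pow, mul_pow]; exact hsub₀)
      hclose (min_le_right _ _)
    rw [mul_pow, mul_pow] at h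
    linarith [min_le_left (η / 6) 1]
  have hfst := abs_eulerPoissonField_fst_le hy hzZ hxM (half_pos hη) hmargin
  refine ⟨hmargin, ?_, hfst⟩
  rw [Prod.norm_def, Real.norm_eq_abs, Real.norm_eq_abs]
  refine max_le ?_
    (abs_eulerPoissonField_snd_le hy hzZ (half_pos hzbar) hz₀ hxM (half_pos hη) hmargin)
  calc |(eulerPoissonField y z x).1| ≤ K * |x.1| := hfst
    _ ≤ K * M := by gcongr; exact (norm_fst_le x).trans hxM
    _ ≤ C := le_add_of_nonneg_left (by positivity)

theorem exists_uniform_left_solution {η zbar r Y : ℝ} (hη : 0 < η) (hzbar : 0 < zbar)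
    (hr : 0 ≤ r) (hY : 0 < Y) :
    ∃ a > 0, ∀ y, |y| ≤ Y → ∀ x₀ : ℝ × ℝ, ‖x₀‖ ≤ r → η < 1 - y ^ 2 * zbar ^ 2 * x₀.2 ^ 2 →
      0 < x₀.1 → ∃ f : ℝ → ℝ × ℝ, f zbar = x₀ ∧ ∀ z ∈ Icc (zbar - a) zbar,
        HasDerivWithinAt f (eulerPoissonField y z (f z)) (Icc (zbar - a) zbar) z ∧
          0 < 1 - y ^ 2 * z ^ 2 * (f z).2 ^ 2 ∧ 0 < (f z).1 := by
  obtain ⟨a, R, C, K, ha, haz, hR, hCa, htube⟩ := exists_uniform_tube hη hzbar hr hY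
  refine ⟨a, ha, fun y hy x₀ hx₀ hsub₀ hpos₀ ↦ ?_⟩
  replace htube := htube y hy x₀ hx₀ hsub₀
  have hsmooth : ContDiffOn ℝ 1 (Function.uncurry (eulerPoissonField y))
      (Icc (zbar - a) zbar ×ˢ closedBall x₀ R) :=
    (contDiffOn_uncurry_eulerPoissonField y).mono fun q hq ↦
      ⟨by linarith [hq.1.1], ((half_pos hη).trans_le (htube q.1 hq.1 q.2 hq.2).1).ne'⟩
  obtain ⟨L, hL⟩ := hsmooth.exists_lipschitzOnWith_uncurry (convex_Icc _ _) isCompact_Icc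
    (convex_closedBall _ _) (isCompact_closedBall _ _)
  have hzbar_mem : zbar ∈ Icc (zbar - a) zbar := ⟨by linarith, le_rfl⟩
  have hC : 0 ≤ C :=
    (norm_nonneg _).trans (htube zbar hzbar_mem x₀ (mem_closedBall_self hR.le)).2.1
  have hPL : IsPicardLindelof (eulerPoissonField y) (⟨zbar, hzbar_mem⟩ : Icc (zbar - a) zbar) x₀
      ⟨R, hR.le⟩ 0 ⟨C, hC⟩ L :=
    { lipschitzOnWith := hL
      continuousOn := fun x hx ↦ hsmooth.continuousOn.comp
        (continuous_id.prodMk continuous_const).continuousOn fun z hz ↦ ⟨hz, hx⟩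
      norm_le := fun z hz x hx ↦ (htube z hz x hx).2.1
      mul_max_le := by
        simp only [NNReal.coe_zero, sub_zero, sub_self, sub_sub_cancel]
        rwa [max_eq_right ha.le] }
  obtain ⟨f, hf₀, hf⟩ := hPL.exists_eq_forall_mem_Icc_hasDerivWithinAt_mem_closedBall
  have hpos := pos_of_hasDerivWithinAt_of_abs_deriv_le_mul_abs_self
    (fun z hz ↦ hasFDerivAt_fst.comp_hasDerivWithinAt z (hf z hz).2)
    (fun z hz ↦ (htube z hz (f z) (hf z hz).1).2.2)
    (by simpa [Function.comp_def, ← hf₀] using hpos₀)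
  exact ⟨f, hf₀, fun z hz ↦ ⟨(hf z hz).2,
    (half_pos hη).trans_le (htube z hz (f z) (hf z hz).1).1, hpos z hz⟩⟩

theorem quantitative_left_continuation_general
    (η zbar : ℝ) (hη : 0 < η) (hzbar : 0 < zbar) :
    ∃ t : ℝ, 0 < t ∧
      ∀ (y : ℝ), y ∈ Set.Icc (2 : ℝ) 3 →
      ∀ (z₁ : ℝ), zbar < z₁ → z₁ < 1 →
      ∀ ρ ω : ℝ → ℝ,
        (∃ A B : ℝ, A < zbar ∧ z₁ < B ∧
          ∀ z ∈ Set.Ioo A B,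
            DifferentiableAt ℝ ρ z ∧ DifferentiableAt ℝ ω z ∧ EPSys y ρ ω z) →
        (∀ z ∈ Set.Icc zbar z₁,
          η < 1 - y ^ 2 * z ^ 2 * (ω z) ^ 2 ∧ 0 < ρ z ∧
          |ρ z| ≤ 1 / (y * zbar) ∧ |ω z| ≤ 1 / (y * zbar)) →
        ∃ ρext ωext : ℝ → ℝ,
          Set.EqOn ρext ρ (Set.Icc zbar z₁) ∧
          Set.EqOn ωext ω (Set.Icc zbar z₁) ∧
          ∀ z ∈ Set.Icc (zbar - t) z₁,
            DifferentiableAt ℝ ρext z ∧ DifferentiableAt ℝ ωext z ∧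
            EPSys y ρext ωext z ∧
            0 < 1 - y ^ 2 * z ^ 2 * (ωext z) ^ 2 ∧ 0 < ρext z := by
  obtain ⟨a, ha, hsol⟩ :=
    exists_uniform_left_solution (r := 1 / (2 * zbar)) hη hzbar (by positivity) three_pos
  refine ⟨a / 2, half_pos ha, fun y hy z₁ hz₁ _ ρ ω ⟨A, B, hA, hB, hρω⟩ hbnd ↦ ?_⟩
  obtain ⟨hsub₀, hpos₀, hρ₀, hω₀⟩ := hbnd zbar ⟨le_rfl, hz₁.le⟩
  have hr : 1 / (y * zbar) ≤ 1 / (2 * zbar) :=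
    one_div_le_one_div_of_le (by positivity) (by nlinarith [hy.1])
  obtain ⟨f, hf₀, hf⟩ := hsol y (abs_le.2 ⟨by linarith [hy.1], hy.2⟩) (ρ zbar, ω zbar)
    (norm_prod_le_iff.2 ⟨hρ₀.trans hr, hω₀.trans hr⟩) hsub₀ hpos₀
  set Φ : ℝ → ℝ × ℝ := fun t ↦ if t < zbar then f t else (ρ t, ω t)
  have hΦ_right (t : ℝ) (ht : zbar ≤ t) : Φ t = (ρ t, ω t) := if_neg ht.not_gt
  refine ⟨fun t ↦ (Φ t).1, fun t ↦ (Φ t).2, fun t ht ↦ by simp [hΦ_right t ht.1],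
    fun t ht ↦ by simp [hΦ_right t ht.1], fun z hz ↦ ?_⟩
  have hleft (hzb : z ≤ zbar) := hf z ⟨by linarith [hz.1], hzb⟩
  have hΦ : HasDerivAt Φ (eulerPoissonField y z (Φ z)) z := by
    refine hasDerivAt_ite_lt (fun hzb ↦ (hleft hzb).1.mono_of_mem_nhdsWithin ?_)
      (fun hzb ↦ ?_) (by rw [hf₀])
    · exact Filter.mem_of_superset (inter_mem_nhdsWithin _ (Ioi_mem_nhds (by linarith [hz.1])))
        fun t ht ↦ ⟨ht.2.le, ht.1⟩
    · obtain ⟨hρ, hω, hsys⟩ := hρω z ⟨by linarith, by linarith [hz.2]⟩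
      exact hsys.hasDerivAt hρ hω
  obtain ⟨hdρ, hdω, hsys⟩ := epSys_of_hasDerivAt hΦ
  refine ⟨hdρ, hdω, hsys, ?_⟩
  rcases lt_or_ge z zbar with hzb | hzb
  · simpa only [Φ, if_pos hzb] using (hleft hzb.le).2
  · obtain ⟨hsub, hpos, -, -⟩ := hbnd z ⟨hzb, hz.2⟩
    simp only [hΦ_right z hzb]
    exact ⟨hη.trans hsub, hpos⟩

/-- Quantitative continuation to the left: a solution which is a distance `η` from the
sonic line on `[z̄, z₁]` extends to the left by a time `t = t(η, z̄)` independent of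
`y*`, `z₁` and the particular solution. -/
theorem quantitative_left_continuation
    (η zbar : ℝ) (hη : 0 < η) (hzbar : 0 < zbar) (hzbar1 : zbar < 1) :
    ∃ t : ℝ, 0 < t ∧
      ∀ (y : ℝ), y ∈ Set.Icc (2 : ℝ) 3 →
      ∀ (z₁ : ℝ), zbar < z₁ → z₁ < 1 →
      ∀ ρ ω : ℝ → ℝ,
        (∃ A B : ℝ, A < zbar ∧ z₁ < B ∧
          ∀ z ∈ Set.Ioo A B,
            DifferentiableAt ℝ ρ z ∧ DifferentiableAt ℝ ω z ∧ EPSys y ρ ω z) →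
        (∀ z ∈ Set.Icc zbar z₁,
          η < 1 - y ^ 2 * z ^ 2 * (ω z) ^ 2 ∧ 0 < ρ z ∧
          |ρ z| ≤ 1 / (y * zbar) ∧ |ω z| ≤ 1 / (y * zbar)) →
        ∃ ρext ωext : ℝ → ℝ,
          Set.EqOn ρext ρ (Set.Icc zbar z₁) ∧
          Set.EqOn ωext ω (Set.Icc zbar z₁) ∧
          ∀ z ∈ Set.Icc (zbar - t) z₁,
            DifferentiableAt ℝ ρext z ∧ DifferentiableAt ℝ ωext z ∧
            EPSys y ρext ωext z ∧
            0 < 1 - y ^ 2 * z ^ 2 * (ωext z) ^ 2 ∧ 0 < ρext z :=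
  quantitative_left_continuation_general η zbar hη hzbar
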